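/- Let ψ : ℝ → ℝ be continuous and nondecreasing, and let G be its Beurling–Ahlfors extension. Then G is differentiable at every point (x,y) ∈ ℝ×(0,∞); the partial derivative in x of the first coordinate of G equals (ψ(x+y) − ψ(x−y))/(2y); each of the four first-order partial derivatives of the coordinates of G at (x,y) is bounded in absolute value by (ψ(x+y) − ψ(x−y))/y; and consequently the operator norm of the total derivative DG(x,y) is at most 4·(ψ(x+y) − ψ(x−y))/y. -/

import Mathlib

/-!
If `F` is a primitive of `ψ`, the substitution `u = x ± t y` turns both integrals into difference
quotients of `F`: for `y ≠ 0` the extension equals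
`((F (x + y) - F (x - y)) / (2 y), (F (x + y) + F (x - y) - 2 F x) / y)`, which is differentiable
with explicit partial derivatives. These are combinations of values of `ψ` at `x - y, x, x + y`
and of slopes of `F` over `[x - y, x + y]`, `[x, x + y]`, `[x - y, x]`; by the mean value theorem
and the monotonicity of `ψ` each such slope lies between the values of `ψ` at the endpoints, which
yields the bounds. The operator norm is at most the sum of the norms of the two columns.
-/

open MeasureTheory

/-- The Beurling–Ahlfors extension of `ψ : ℝ → ℝ`, as a map on the (open) upper half-plane. -/
noncomputable def BA (ψ : ℝ → ℝ) (p : ℝ × ℝ) : ℝ × ℝ :=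
  ((1 / 2) * ∫ t in (0 : ℝ)..1, (ψ (p.1 + t * p.2) + ψ (p.1 - t * p.2)),
    ∫ t in (0 : ℝ)..1, (ψ (p.1 + t * p.2) - ψ (p.1 - t * p.2)))

theorem ContinuousLinearMap.opNorm_le_apply_inl_add_apply_inr {𝕜 E : Type*}
    [NontriviallyNormedField 𝕜] [SeminormedAddCommGroup E] [NormedSpace 𝕜 E]
    (L : 𝕜 × 𝕜 →L[𝕜] E) : ‖L‖ ≤ ‖L (1, 0)‖ + ‖L (0, 1)‖ := by
  refine L.opNorm_le_bound (by positivity) fun v => ?_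
  have hv : v = v.1 • ((1 : 𝕜), (0 : 𝕜)) + v.2 • ((0 : 𝕜), (1 : 𝕜)) := by ext <;> simp
  calc ‖L v‖ = ‖v.1 • L (1, 0) + v.2 • L (0, 1)‖ := by
        conv_lhs => rw [hv]
        rw [map_add, map_smul, map_smul]
    _ ≤ ‖v.1‖ * ‖L (1, 0)‖ + ‖v.2‖ * ‖L (0, 1)‖ := (norm_add_le _ _).trans_eq <| by
        rw [norm_smul, norm_smul]
    _ ≤ ‖v‖ * ‖L (1, 0)‖ + ‖v‖ * ‖L (0, 1)‖ := by
        gcongr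
        exacts [_root_.norm_fst_le v, _root_.norm_snd_le v]
    _ = (‖L (1, 0)‖ + ‖L (0, 1)‖) * ‖v‖ := by ring

section

variable {ψ F : ℝ → ℝ}

theorem Monotone.slope_mem_Icc_of_hasDerivAt (hψ : Monotone ψ)
    (hF : ∀ u, HasDerivAt F (ψ u) u) {a b : ℝ} (hab : a < b) :
    slope F a b ∈ Set.Icc (ψ a) (ψ b) := by
  obtain ⟨c, hc, hslope⟩ := exists_hasDerivAt_eq_slope F ψ hab
    (fun u _ => (hF u).continuousAt.continuousWithinAt) fun u _ => hF u
  rw [slope_def_field, ← hslope]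
  exact ⟨hψ hc.1.le, hψ hc.2.le⟩

theorem integral_comp_add_mul_eq_div_of_hasDerivAt (hF : ∀ u, HasDerivAt F (ψ u) u)
    (hψ : Continuous ψ) (x : ℝ) {y : ℝ} (hy : y ≠ 0) :
    ∫ t in (0 : ℝ)..1, ψ (x + t * y) = (F (x + y) - F x) / y := by
  have hderiv : ∀ t, HasDerivAt (fun t => F (x + t * y) / y) (ψ (x + t * y)) t := fun t => by
    have := ((hF (x + t * y)).comp t (((hasDerivAt_id t).mul_const y).const_add x)).div_const y
    simpa [hy] using this
  rw [intervalIntegral.integral_eq_sub_of_hasDerivAt (fun t _ => hderiv t)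
    ((hψ.comp (by fun_prop)).intervalIntegrable _ _)]
  simp only [one_mul, zero_mul, add_zero]
  ring

noncomputable def baOfPrimitive (F : ℝ → ℝ) (p : ℝ × ℝ) : ℝ × ℝ :=
  ((F (p.1 + p.2) - F (p.1 - p.2)) / (2 * p.2), (F (p.1 + p.2) + F (p.1 - p.2) - 2 * F p.1) / p.2)

theorem BA_eq_baOfPrimitive (hF : ∀ u, HasDerivAt F (ψ u) u) (hψ : Continuous ψ)
    {p : ℝ × ℝ} (hp : p.2 ≠ 0) : BA ψ p = baOfPrimitive F p := by
  have hplus := integral_comp_add_mul_eq_div_of_hasDerivAt hF hψ p.1 hp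
  have hminus := integral_comp_add_mul_eq_div_of_hasDerivAt hF hψ p.1 (neg_ne_zero.2 hp)
  simp only [mul_neg, ← sub_eq_add_neg] at hminus
  have hint_plus : IntervalIntegrable (fun t => ψ (p.1 + t * p.2)) volume 0 1 :=
    (hψ.comp (by fun_prop)).intervalIntegrable _ _
  have hint_minus : IntervalIntegrable (fun t => ψ (p.1 - t * p.2)) volume 0 1 :=
    (hψ.comp (by fun_prop)).intervalIntegrable _ _
  rw [BA, baOfPrimitive, intervalIntegral.integral_add hint_plus hint_minus,
    intervalIntegral.integral_sub hint_plus hint_minus, hplus, hminus]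
  ext <;> field_simp <;> ring

theorem BA_eventuallyEq_baOfPrimitive (hF : ∀ u, HasDerivAt F (ψ u) u) (hψ : Continuous ψ)
    {p : ℝ × ℝ} (hp : p.2 ≠ 0) : BA ψ =ᶠ[nhds p] baOfPrimitive F :=
  Filter.eventuallyEq_of_mem ((isOpen_ne_fun continuous_snd continuous_const).mem_nhds hp)
    fun _ hq => BA_eq_baOfPrimitive hF hψ hq

theorem hasFDerivAt_baOfPrimitive (hF : ∀ u, HasDerivAt F (ψ u) u) (x : ℝ) {y : ℝ} (hy : y ≠ 0) :
    ∃ L : ℝ × ℝ →L[ℝ] ℝ × ℝ, HasFDerivAt (baOfPrimitive F) L (x, y) ∧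
      L (1, 0) = ((ψ (x + y) - ψ (x - y)) / (2 * y), (ψ (x + y) + ψ (x - y) - 2 * ψ x) / y) ∧
      L (0, 1) = (((ψ (x + y) + ψ (x - y)) / 2 - slope F (x - y) (x + y)) / y,
        (ψ (x + y) - ψ (x - y) - (slope F x (x + y) - slope F (x - y) x)) / y) := by
  have hsum : HasFDerivAt (fun p : ℝ × ℝ => p.1 + p.2)
      (ContinuousLinearMap.fst ℝ ℝ ℝ + ContinuousLinearMap.snd ℝ ℝ ℝ) (x, y) :=
    hasFDerivAt_fst.add hasFDerivAt_snd
  have hdiff : HasFDerivAt (fun p : ℝ × ℝ => p.1 - p.2)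
      (ContinuousLinearMap.fst ℝ ℝ ℝ - ContinuousLinearMap.snd ℝ ℝ ℝ) (x, y) :=
    hasFDerivAt_fst.sub hasFDerivAt_snd
  have hplus := (hF (x + y)).comp_hasFDerivAt (x, y) hsum
  have hminus := (hF (x - y)).comp_hasFDerivAt (x, y) hdiff
  have hcenter := (hF x).comp_hasFDerivAt (x, y) (hasFDerivAt_fst (𝕜 := ℝ) (E := ℝ) (F := ℝ))
  have hinv :=
    (hasDerivAt_inv hy).comp_hasFDerivAt (x, y) (hasFDerivAt_snd (𝕜 := ℝ) (E := ℝ) (F := ℝ))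
  refine ⟨_, (((hplus.sub hminus).mul (hinv.const_mul 2⁻¹)).prodMk
    (((hplus.add hminus).sub (hcenter.const_mul 2)).mul hinv)).congr_of_eventuallyEq ?_, ?_, ?_⟩
  · refine Filter.Eventually.of_forall fun p => ?_
    simp only [baOfPrimitive, Pi.mul_apply, Pi.sub_apply, Pi.add_apply, Function.comp_apply]
    ext <;> ring
  all_goals
    simp only [Pi.sub_apply, Pi.add_apply, Function.comp_apply, ContinuousLinearMap.prod_apply,
      ContinuousLinearMap.coe_fst', ContinuousLinearMap.coe_snd', add_apply, sub_apply, smul_apply,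
      smul_eq_mul, slope_def_field, add_sub_sub_cancel, add_sub_cancel_left, sub_sub_cancel,
      Prod.mk.injEq]
    constructor <;> field_simp <;> ring

end

theorem stmt10 (ψ : ℝ → ℝ) (hmono : Monotone ψ) (hcont : Continuous ψ)
    (x y : ℝ) (hy : 0 < y) :
    ∃ L : ℝ × ℝ →L[ℝ] ℝ × ℝ,
      HasFDerivAt (BA ψ) L (x, y) ∧
      (L (1, 0)).1 = (ψ (x + y) - ψ (x - y)) / (2 * y) ∧
      |(L (1, 0)).1| ≤ (ψ (x + y) - ψ (x - y)) / y ∧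
      |(L (1, 0)).2| ≤ (ψ (x + y) - ψ (x - y)) / y ∧
      |(L (0, 1)).1| ≤ (ψ (x + y) - ψ (x - y)) / y ∧
      |(L (0, 1)).2| ≤ (ψ (x + y) - ψ (x - y)) / y ∧
      ‖L‖ ≤ 4 * (ψ (x + y) - ψ (x - y)) / y := by
  set F : ℝ → ℝ := fun u => ∫ t in (0 : ℝ)..u, ψ t
  have hF : ∀ u, HasDerivAt F (ψ u) u := fun u => (hcont.integral_hasStrictDerivAt 0 u).hasDerivAt
  obtain ⟨L, hL, h10, h01⟩ := hasFDerivAt_baOfPrimitive hF x hy.ne'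
  obtain ⟨hs₁, hs₂⟩ := hmono.slope_mem_Icc_of_hasDerivAt hF (by linarith : x - y < x + y)
  obtain ⟨hr₁, hr₂⟩ := hmono.slope_mem_Icc_of_hasDerivAt hF (by linarith : x < x + y)
  obtain ⟨hl₁, hl₂⟩ := hmono.slope_mem_Icc_of_hasDerivAt hF (by linarith : x - y < x)
  have hdiv : ∀ N, -(ψ (x + y) - ψ (x - y)) ≤ N → N ≤ ψ (x + y) - ψ (x - y) →
      |N / y| ≤ (ψ (x + y) - ψ (x - y)) / y := fun N hN₁ hN₂ => by
    rw [abs_div, abs_of_pos hy]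
    exact div_le_div_of_nonneg_right (abs_le.2 ⟨hN₁, hN₂⟩) hy.le
  have h10₁ : |(L (1, 0)).1| ≤ (ψ (x + y) - ψ (x - y)) / y := by
    rw [h10, div_mul_eq_div_div]; exact hdiv _ (by linarith) (by linarith)
  have h10₂ : |(L (1, 0)).2| ≤ (ψ (x + y) - ψ (x - y)) / y := by
    rw [h10]; exact hdiv _ (by linarith) (by linarith)
  have h01₁ : |(L (0, 1)).1| ≤ (ψ (x + y) - ψ (x - y)) / y := by
    rw [h01]; exact hdiv _ (by linarith) (by linarith)
  have h01₂ : |(L (0, 1)).2| ≤ (ψ (x + y) - ψ (x - y)) / y := by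
    rw [h01]; exact hdiv _ (by linarith) (by linarith)
  have hM : 0 ≤ (ψ (x + y) - ψ (x - y)) / y := div_nonneg (by linarith) hy.le
  refine ⟨L, hL.congr_of_eventuallyEq (BA_eventuallyEq_baOfPrimitive hF hcont hy.ne'),
    by rw [h10], h10₁, h10₂, h01₁, h01₂, ?_⟩
  calc ‖L‖ ≤ ‖L (1, 0)‖ + ‖L (0, 1)‖ := L.opNorm_le_apply_inl_add_apply_inr
    _ ≤ (ψ (x + y) - ψ (x - y)) / y + (ψ (x + y) - ψ (x - y)) / y :=
      add_le_add (max_le h10₁ h10₂) (max_le h01₁ h01₂)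
    _ ≤ 4 * (ψ (x + y) - ψ (x - y)) / y := by rw [mul_div_assoc]; linarith
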